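/- For trees τ, τ̄ with C₊(τ̄, τ) ≠ 0, the following count identities hold: m_Ξ(τ) = m_Ξ(τ̄) + m_Ξ(C₊(τ̄,τ)); m_𝟏(τ̄) + m_X(τ̄) equals the number of planted trees (with multiplicity) in the forest C₊(τ̄,τ); m_𝟏(τ) = m_𝟏(C₊(τ̄,τ)); and m_X(τ) = m_X(C₊(τ̄,τ)). -/

import Mathlib

/-- Trees built from generators `𝟏`, `X i`, `Ξ` by the ternary product
`τ₁,τ₂,τ₃ ↦ I(τ₁)I(τ₂)I(τ₃)`. -/
inductive T (d : ℕ) : Type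
  | one : T d
  | X : Fin d → T d
  | Xi : T d
  | prod : T d → T d → T d → T d
deriving DecidableEq

namespace T

variable {d : ℕ}

/-- The order of a tree, with parameter `δ`. -/
noncomputable def order (δ : ℝ) : T d → ℝ
  | one => -2
  | X _ => -1
  | Xi => -3 + δ
  | prod a b c => 6 + order δ a + order δ b + order δ c

/-- Number of `𝟏`-leaves. -/
def mOne : T d → ℕ
  | one => 1
  | X _ => 0
  | Xi => 0
  | prod a b c => mOne a + mOne b + mOne c

/-- Total number of `X i`-leaves. -/
def mX : T d → ℕ
  | one => 0
  | X _ => 1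
  | Xi => 0
  | prod a b c => mX a + mX b + mX c

/-- Number of noise leaves `Ξ`. -/
def mXi : T d → ℕ
  | one => 0
  | X _ => 0
  | Xi => 1
  | prod a b c => mXi a + mXi b + mXi c

end T

namespace T
/-- Whether a tree is a ternary product (i.e. not a generator). -/
def isProd {d : ℕ} : T d → Bool
  | prod _ _ _ => true
  | _ => false

/-- Membership in `Ñ`: ternary-product trees of order in `(-1, 0)`. -/
def inTildeN {d : ℕ} (δ : ℝ) (τ : T d) : Prop :=
  isProd τ = true ∧ -1 < order δ τ ∧ order δ τ < 0

noncomputable instance {d : ℕ} (δ : ℝ) (τ : T d) : Decidable (inTildeN δ τ) := by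
  unfold inTildeN; infer_instance
end T

/-- Planted trees: `I(τ)` and the derivative-planted trees `I⁺ᵢ(τ)`. -/
inductive PT (d : ℕ) : Type
  | I : T d → PT d
  | Ip : Fin d → T d → PT d
deriving DecidableEq

/-- The cut map `C₊(τ̄, τ)`, returning a forest of planted trees, or `none`
(representing `0`).  This is the recursive definition of Table 1; the zero
conventions `I⁺ᵢ(X_j) = 0` for `j ≠ i`, `I⁺ᵢ(τ) = 0` for `τ ∉ Ñ` and the
projection `p₊` onto planted trees of positive order are built in. -/
noncomputable def Cplus {d : ℕ} (δ : ℝ) : T d → T d → Option (List (PT d))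
  | T.one, T.one => some [PT.I T.one]
  | T.one, T.X j => some [PT.I (T.X j)]
  | T.one, T.prod x y z =>
      if 0 < T.order δ (T.prod x y z) + 2 then some [PT.I (T.prod x y z)] else none
  | T.X i, T.X j => if i = j then some [PT.Ip i (T.X j)] else none
  | T.X i, T.prod x y z =>
      if T.inTildeN δ (T.prod x y z) then some [PT.Ip i (T.prod x y z)] else none
  | T.Xi, T.Xi => some []
  | T.prod a b c, T.prod x y z =>
      match Cplus δ a x, Cplus δ b y, Cplus δ c z with
      | some f1, some f2, some f3 => some (f1 ++ f2 ++ f3)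
      | _, _, _ => none
  | _, _ => none

namespace PT
/-- Leaf counts extended to planted trees. -/
def mOne {d : ℕ} : PT d → ℕ
  | I τ => T.mOne τ
  | Ip _ τ => T.mOne τ

def mX {d : ℕ} : PT d → ℕ
  | I τ => T.mX τ
  | Ip _ τ => T.mX τ

def mXi {d : ℕ} : PT d → ℕ
  | I τ => T.mXi τ
  | Ip _ τ => T.mXi τ
end PT

/-- Leaf counts extended to forests of planted trees, by summation. -/
def FmOne {d : ℕ} (f : List (PT d)) : ℕ := (f.map PT.mOne).sum
def FmX {d : ℕ} (f : List (PT d)) : ℕ := (f.map PT.mX).sum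
def FmXi {d : ℕ} (f : List (PT d)) : ℕ := (f.map PT.mXi).sum

/-! `C₊(τ̄, τ)` is computed by matching `τ̄` against `τ` from the root: every `𝟏`- or `X`-leaf of
`τ̄` cuts off exactly one planted tree, namely the subtree of `τ` at that leaf, and every `Ξ`-leaf
of `τ̄` matches a `Ξ`-leaf of `τ` and cuts off nothing. All four counts are therefore additive
along the recursion. -/

section Forest

variable {d : ℕ} (f g : List (PT d))

theorem FmOne_append : FmOne (f ++ g) = FmOne f + FmOne g := by
  simp [FmOne]

theorem FmX_append : FmX (f ++ g) = FmX f + FmX g := by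
  simp [FmX]

theorem FmXi_append : FmXi (f ++ g) = FmXi f + FmXi g := by
  simp [FmXi]

end Forest

namespace Cplus

variable {d : ℕ} {δ : ℝ} {τ : T d} {f : List (PT d)}

theorem one_eq_some (h : Cplus δ T.one τ = some f) : f = [PT.I τ] := by
  cases τ with
  | prod x y z =>
    simp only [Cplus] at h
    split_ifs at h
    exact (Option.some.inj h).symm
  | _ => simp_all [Cplus]

theorem X_eq_some {i : Fin d} (h : Cplus δ (T.X i) τ = some f) : f = [PT.Ip i τ] := by
  cases τ with
  | X j =>
    simp only [Cplus] at h
    split_ifs at h with hij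
    subst hij
    exact (Option.some.inj h).symm
  | prod x y z =>
    simp only [Cplus] at h
    split_ifs at h
    exact (Option.some.inj h).symm
  | _ => simp [Cplus] at h

theorem Xi_eq_some (h : Cplus δ T.Xi τ = some f) : τ = T.Xi ∧ f = [] := by
  cases τ <;> simp_all [Cplus]

theorem prod_eq_some {a b c : T d} (h : Cplus δ (T.prod a b c) τ = some f) :
    ∃ x y z f₁ f₂ f₃, τ = T.prod x y z ∧ Cplus δ a x = some f₁ ∧ Cplus δ b y = some f₂ ∧
      Cplus δ c z = some f₃ ∧ f = f₁ ++ f₂ ++ f₃ := by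
  cases τ with
  | prod x y z =>
    simp only [Cplus] at h
    split at h
    · next f₁ f₂ f₃ h₁ h₂ h₃ => exact ⟨x, y, z, f₁, f₂, f₃, rfl, h₁, h₂, h₃, (Option.some.inj h).symm⟩
    · simp at h
  | _ => simp [Cplus] at h

theorem induction_on {motive : T d → T d → List (PT d) → Prop}
    (one : ∀ τ, motive T.one τ [PT.I τ])
    (X : ∀ i τ, motive (T.X i) τ [PT.Ip i τ])
    (Xi : motive T.Xi T.Xi [])
    (prod : ∀ {a b c x y z f₁ f₂ f₃}, motive a x f₁ → motive b y f₂ → motive c z f₃ →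
      motive (T.prod a b c) (T.prod x y z) (f₁ ++ f₂ ++ f₃))
    {τbar : T d} (h : Cplus δ τbar τ = some f) : motive τbar τ f := by
  induction τbar generalizing τ f with
  | one => exact one_eq_some h ▸ one τ
  | X i => exact X_eq_some h ▸ X i τ
  | Xi =>
    obtain ⟨rfl, rfl⟩ := Xi_eq_some h
    exact Xi
  | prod a b c iha ihb ihc =>
    obtain ⟨x, y, z, f₁, f₂, f₃, rfl, h₁, h₂, h₃, rfl⟩ := prod_eq_some h
    exact prod (iha h₁) (ihb h₂) (ihc h₃)

variable {τbar : T d}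

theorem mXi_eq (h : Cplus δ τbar τ = some f) : T.mXi τ = T.mXi τbar + FmXi f :=
  induction_on (motive := fun τbar τ f => T.mXi τ = T.mXi τbar + FmXi f)
    (fun _ => by simp [T.mXi, FmXi, PT.mXi]) (fun _ _ => by simp [T.mXi, FmXi, PT.mXi]) rfl
    (fun h₁ h₂ h₃ => by simp only [T.mXi, FmXi_append, h₁, h₂, h₃]; ring) h

theorem length_eq (h : Cplus δ τbar τ = some f) : T.mOne τbar + T.mX τbar = f.length :=
  induction_on (motive := fun τbar _ f => T.mOne τbar + T.mX τbar = f.length)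
    (fun _ => rfl) (fun _ _ => rfl) rfl
    (fun h₁ h₂ h₃ => by simp only [T.mOne, T.mX, List.length_append, ← h₁, ← h₂, ← h₃]; ring) h

theorem mOne_eq (h : Cplus δ τbar τ = some f) : T.mOne τ = FmOne f :=
  induction_on (motive := fun _ τ f => T.mOne τ = FmOne f)
    (fun _ => by simp [FmOne, PT.mOne]) (fun _ _ => by simp [FmOne, PT.mOne]) rfl
    (fun h₁ h₂ h₃ => by simp only [T.mOne, FmOne_append, h₁, h₂, h₃]) h

theorem mX_eq (h : Cplus δ τbar τ = some f) : T.mX τ = FmX f :=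
  induction_on (motive := fun _ τ f => T.mX τ = FmX f)
    (fun _ => by simp [FmX, PT.mX]) (fun _ _ => by simp [FmX, PT.mX]) rfl
    (fun h₁ h₂ h₃ => by simp only [T.mX, FmX_append, h₁, h₂, h₃]) h

end Cplus

/-- if `C₊(τ̄, τ) ≠ 0` then
`m_Ξ(τ) = m_Ξ(τ̄) + m_Ξ(C₊(τ̄,τ))`, `m_𝟏(τ̄) + m_X(τ̄) = ♯C₊(τ̄,τ)`,
`m_𝟏(τ) = m_𝟏(C₊(τ̄,τ))` and `m_X(τ) = m_X(C₊(τ̄,τ))`. -/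
theorem Cplus_leaf_count_identities (d : ℕ) (δ : ℝ) (τbar τ : T d)
    (f : List (PT d)) (h : Cplus δ τbar τ = some f) :
    T.mXi τ = T.mXi τbar + FmXi f ∧
      T.mOne τbar + T.mX τbar = f.length ∧
      T.mOne τ = FmOne f ∧
      T.mX τ = FmX f :=
  ⟨Cplus.mXi_eq h, Cplus.length_eq h, Cplus.mOne_eq h, Cplus.mX_eq h⟩
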